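/- arXiv:2303.02714 — 3 statements merged into one kernel-verified Lean document; each statement's English description precedes it below -/
import Mathlib

section
/- For valid labelings X ≠ Y, the map (σ, I) ↦ (σ', I) is a well-defined bijection from the set of moves that map X to Y onto the set of moves that map Y to X. -/
/-! A move mapping `X` to `Y` must propose `Y v` at every vertex where `X` and `Y` differ, and
`σ'` only replaces these proposals by `X v`. Hence `σ ↦ σ'` for `(X, Y)` and for `(Y, X)` are
mutually inverse on the two sets of moves, and each maps its set into the other. -/

open scoped Classical
open Finset

noncomputable section

namespace DistSampling

variable {V L : Type*} [Fintype V] [Fintype L] [DecidableEq V] [DecidableEq L]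
  [Nonempty V] [Nonempty L]

/-- `Sw b v` is the normalizing constant `S_v = Σ_{l ∈ L} b_v(l)`. -/
def Sw (b : V → L → ℝ) (v : V) : ℝ := ∑ l, b v l

/-- `Cstar C R` is the maximum value `C*_R` of the constraint `C_R` over all labelings. -/
def Cstar (C : Finset V → (V → L) → ℝ) (R : Finset V) : ℝ :=
  Finset.univ.sup' Finset.univ_nonempty (fun X : V → L => C R X)

/-- The weight `w(X)` of a labeling `X`. -/
def weight (b : V → L → ℝ) (𝒮 : Finset (Finset V)) (C : Finset V → (V → L) → ℝ)
    (X : V → L) : ℝ :=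
  (∏ v, b v (X v)) * ∏ R ∈ 𝒮, C R X

/-- A vertex is restricted under the filter outcome `I` if it belongs to a
constraint set that fails its filter. -/
def Restricted (𝒮 : Finset (Finset V)) (I : {R // R ∈ 𝒮} → Bool) (v : V) : Prop :=
  ∃ R : {R // R ∈ 𝒮}, v ∈ R.val ∧ I R = false

/-- The move `(σ, I)` maps the labeling `X` to the labeling `Y`:
active unrestricted vertices adopt their proposal, everyone else keeps their label. -/
def MoveMapsTo (𝒮 : Finset (Finset V)) (σ : V → Option L) (I : {R // R ∈ 𝒮} → Bool)
    (X Y : V → L) : Prop :=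
  ∀ v, Y v = if Restricted 𝒮 I v then X v else (σ v).getD (X v)

/-- A choice vector for constraint set `R`: each vertex of `R` chooses 'cur'
(`false`) or, if active, 'prop' (`true`), with at least one 'prop'; vertices
outside `R` make no choice. -/
def IsChoice (σ : V → Option L) (R : Finset V) (c : V → Bool) : Prop :=
  (∀ v, c v = true → v ∈ R ∧ (σ v).isSome) ∧ (∃ v ∈ R, c v = true)

/-- The potential labeling `ℓ_c` determined by a choice vector `c`. -/
def potential (σ : V → Option L) (X : V → L) (c : V → Bool) : V → L :=
  fun v => if c v then (σ v).getD (X v) else X v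

/-- `q_R(σ, X)`: the probability that constraint set `R` passes the local filter. -/
def q (C : Finset V → (V → L) → ℝ) (σ : V → Option L) (X : V → L) (R : Finset V) : ℝ :=
  ∏ c ∈ Finset.univ.filter (fun c : V → Bool => IsChoice σ R c),
    C R (potential σ X c) / Cstar C R

/-- `P(σ)`: the probability of the marking/proposal outcome `σ`. -/
def Pprop (b : V → L → ℝ) (p : ℝ) (σ : V → Option L) : ℝ :=
  ∏ v, (σ v).elim (1 - p) (fun l => p * b v l / Sw b v)

/-- `P(I | σ, X)`: the probability of the filter outcome `I` given proposal `σ`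
and current labeling `X`. -/
def Pfilter (C : Finset V → (V → L) → ℝ) (𝒮 : Finset (Finset V))
    (σ : V → Option L) (X : V → L) (I : {R // R ∈ 𝒮} → Bool) : ℝ :=
  ∏ R : {R // R ∈ 𝒮}, (if I R then q C σ X R.val else 1 - q C σ X R.val)

/-- The transition matrix `M` of the distributed Metropolis chain. -/
def M (b : V → L → ℝ) (p : ℝ) (𝒮 : Finset (Finset V))
    (C : Finset V → (V → L) → ℝ) : Matrix (V → L) (V → L) ℝ :=
  fun X Y => ∑ σ : V → Option L, ∑ I : {R // R ∈ 𝒮} → Bool,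
    if MoveMapsTo 𝒮 σ I X Y then Pprop b p σ * Pfilter C 𝒮 σ X I else 0

/-- `π(X)`: the probability of labeling `X`, proportional to its weight. -/
def pie (b : V → L → ℝ) (𝒮 : Finset (Finset V)) (C : Finset V → (V → L) → ℝ)
    (X : V → L) : ℝ :=
  weight b 𝒮 C X / ∑ Z : V → L, weight b 𝒮 C Z

/-- The modified proposal `σ'` associated with a move taking `X` to `Y`. -/
def sigma' (X Y : V → L) (σ : V → Option L) : V → Option L :=
  fun v => if X v ≠ Y v then some (X v) else σ v


section

omit [Fintype V] [Fintype L] [DecidableEq V] [Nonempty V] [Nonempty L]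

variable {𝒮 : Finset (Finset V)} {σ : V → Option L} {I : {R // R ∈ 𝒮} → Bool} {X Y : V → L}

omit [DecidableEq L] in
lemma MoveMapsTo.eq_some_of_ne (h : MoveMapsTo 𝒮 σ I X Y) {v : V} (hv : X v ≠ Y v) :
    σ v = some (Y v) := by
  have hYv := h v
  split_ifs at hYv
  · exact absurd hYv.symm hv
  · cases hσ : σ v with
    | none => simp only [hσ, Option.getD_none] at hYv; exact absurd hYv.symm hv
    | some l => simp only [hσ, Option.getD_some] at hYv; rw [hYv]

lemma MoveMapsTo.reverse (h : MoveMapsTo 𝒮 σ I X Y) :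
    MoveMapsTo 𝒮 (sigma' X Y σ) I Y X := by
  intro v
  have hYv := h v
  unfold sigma'
  split_ifs at hYv ⊢ with _ hXY
  · exact hYv.symm
  · rfl
  · rwa [not_not.mp hXY] at hYv ⊢

lemma MoveMapsTo.sigma'_sigma' (h : MoveMapsTo 𝒮 σ I X Y) :
    sigma' Y X (sigma' X Y σ) = σ := by
  funext v
  by_cases hXY : X v = Y v
  · simp [sigma', hXY]
  · simp [sigma', Ne.symm hXY, h.eq_some_of_ne hXY]

end

theorem move_bijection_general
(𝒮 : Finset (Finset V))
    (X Y : V → L) :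
    Set.BijOn
      (fun m : (V → Option L) × ({R // R ∈ 𝒮} → Bool) => (sigma' X Y m.1, m.2))
      {m : (V → Option L) × ({R // R ∈ 𝒮} → Bool) | MoveMapsTo 𝒮 m.1 m.2 X Y}
      {m : (V → Option L) × ({R // R ∈ 𝒮} → Bool) | MoveMapsTo 𝒮 m.1 m.2 Y X} := by
  exact Set.InvOn.bijOn (f' := fun m => (sigma' Y X m.1, m.2))
    ⟨fun _ hm => Prod.ext hm.sigma'_sigma' rfl, fun _ hm => Prod.ext hm.sigma'_sigma' rfl⟩
    (fun _ hm => hm.reverse) (fun _ hm => hm.reverse)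

/-- (σ, I) ↦ (σ', I) is a well-defined bijection from the moves
mapping X to Y onto the moves mapping Y to X. -/
theorem move_bijection
(b : V → L → ℝ) (p : ℝ) (𝒮 : Finset (Finset V)) (C : Finset V → (V → L) → ℝ)
    (hb : ∀ v l, 0 ≤ b v l) (hS : ∀ v, 0 < Sw b v)
    (hcard : ∀ R ∈ 𝒮, 2 ≤ R.card)
    (hC0 : ∀ R ∈ 𝒮, ∀ X : V → L, 0 ≤ C R X)
    (hCloc : ∀ R ∈ 𝒮, ∀ X Y : V → L, (∀ v ∈ R, X v = Y v) → C R X = C R Y)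
    (hCstar : ∀ R ∈ 𝒮, 0 < Cstar C R)
    (hp : 0 < p) (hp1 : p < 1)
    (hvalid : ∃ Z : V → L, 0 < weight b 𝒮 C Z)
    (X Y : V → L) (hX : 0 < weight b 𝒮 C X) (hY : 0 < weight b 𝒮 C Y) (hXY : X ≠ Y) :
    Set.BijOn
      (fun m : (V → Option L) × ({R // R ∈ 𝒮} → Bool) => (sigma' X Y m.1, m.2))
      {m : (V → Option L) × ({R // R ∈ 𝒮} → Bool) | MoveMapsTo 𝒮 m.1 m.2 X Y}
      {m : (V → Option L) × ({R // R ∈ 𝒮} → Bool) | MoveMapsTo 𝒮 m.1 m.2 Y X} :=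
  move_bijection_general 𝒮 X Y

end DistSampling
end
end

section
/- Let X ≠ Y be valid labelings, (σ, I) a move that maps X to Y, and σ' the corresponding modified proposal. Then for every constraint set R ∈ 𝒮: if I_R = 1 then q_R(σ, X) · C_R(X↾R) = q_R(σ', Y) · C_R(Y↾R), and if I_R = 0 then (1 − q_R(σ, X)) · C_R(X↾R) = (1 − q_R(σ', Y)) · C_R(Y↾R). -/
/-!
Let `D` be the set of vertices of `R` on which `X` and `Y` differ. On `D`, `σ` proposes `Y` and
`σ'` proposes `X`; elsewhere on `R` the two sides agree. Toggling the choices on `D` is then a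
bijection between the choice vectors of `(σ, X)` and of `(σ', Y)` preserving the potential
labelings on `R`, except that the vector proposing exactly on `D` (potential labeling `Y↾R`)
is matched with the all-'cur' vector (potential labeling `X↾R`), which is not a choice vector.
So `q_R(σ, X) = P · C_R(Y) / C*_R` and `q_R(σ', Y) = P · C_R(X) / C*_R` for a common product `P`.
If `I_R = 0`, every vertex of `R` is restricted, so `D` is empty and both sides coincide.
-/

open scoped Classical
open Finset

noncomputable section

lemma DependsOn.div_const {ι α : Type*} {f : (ι → α) → ℝ} {s : Set ι} (hf : DependsOn f s)
    (a : ℝ) : DependsOn (fun x => f x / a) s :=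
  fun _ _ h => congrArg (· / a) (hf h)

namespace DistSampling

section Toggle

variable {V L : Type*}

def toggle (D : Finset V) (c : V → Bool) : V → Bool := fun v => xor (c v) (decide (v ∈ D))

@[simp]
lemma toggle_toggle (D : Finset V) (c : V → Bool) : toggle D (toggle D c) = c := by
  funext v
  simp [toggle]

@[simp]
lemma toggle_empty (c : V → Bool) : toggle ∅ c = c := by
  funext v
  simp [toggle]

lemma isChoice_iff {σ : V → Option L} {R : Finset V} {c : V → Bool} :
    IsChoice σ R c ↔ (∀ v, c v = true → v ∈ R ∧ (σ v).isSome) ∧ c ≠ ⊥ := by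
  refine and_congr_right fun hsupp => ⟨?_, fun hc => ?_⟩
  · rintro ⟨v, -, hv⟩ rfl
    simp at hv
  · obtain ⟨v, hv⟩ : ∃ v, c v = true := by
      by_contra! h
      exact hc (funext fun v => by simpa using h v)
    exact ⟨v, (hsupp v hv).1, hv⟩

@[simp]
lemma potential_bot (σ : V → Option L) (X : V → L) : potential σ X ⊥ = X := by
  funext v
  simp [potential]

structure SwapsOn (R D : Finset V) (σ τ : V → Option L) (X Y : V → L) : Prop where
  subset : D ⊆ R
  label_eq : ∀ v ∈ R, v ∉ D → X v = Y v
  proposal_eq : ∀ v ∈ R, v ∉ D → σ v = τ v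
  left_eq_some : ∀ v ∈ D, σ v = some (Y v)
  right_eq_some : ∀ v ∈ D, τ v = some (X v)

namespace SwapsOn

variable {R D : Finset V} {σ τ : V → Option L} {X Y : V → L}

lemma symm (h : SwapsOn R D σ τ X Y) : SwapsOn R D τ σ Y X where
  subset := h.subset
  label_eq v hv hD := (h.label_eq v hv hD).symm
  proposal_eq v hv hD := (h.proposal_eq v hv hD).symm
  left_eq_some := h.right_eq_some
  right_eq_some := h.left_eq_some

lemma potential_toggle (h : SwapsOn R D σ τ X Y) (c : V → Bool) :
    ∀ v ∈ R, potential σ X c v = potential τ Y (toggle D c) v := by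
  intro v hv
  by_cases hD : v ∈ D
  · cases hc : c v <;> simp [potential, toggle, hD, hc, h.left_eq_some v hD, h.right_eq_some v hD]
  · simp [potential, toggle, hD, h.label_eq v hv hD, h.proposal_eq v hv hD]

lemma potential_toggle_bot (h : SwapsOn R D σ τ X Y) :
    ∀ v ∈ R, potential σ X (toggle D ⊥) v = Y v := by
  intro v hv
  simpa using h.potential_toggle (toggle D ⊥) v hv

lemma isChoice_toggle (h : SwapsOn R D σ τ X Y) {c : V → Bool} (hc : IsChoice σ R c)
    (hne : c ≠ toggle D ⊥) : IsChoice τ R (toggle D c) := by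
  rw [isChoice_iff] at hc ⊢
  refine ⟨fun v hv => ?_, fun hbot => hne (by rw [← hbot, toggle_toggle])⟩
  by_cases hD : v ∈ D
  · exact ⟨h.subset hD, by simp [h.right_eq_some v hD]⟩
  · have hcv : c v = true := by simpa [toggle, hD] using hv
    obtain ⟨hvR, hact⟩ := hc.1 v hcv
    exact ⟨hvR, h.proposal_eq v hvR hD ▸ hact⟩

lemma isChoice_toggle_bot (h : SwapsOn R D σ τ X Y) (hD : D.Nonempty) :
    IsChoice σ R (toggle D ⊥) := by
  obtain ⟨w, hw⟩ := hD
  refine ⟨fun v hv => ?_, w, h.subset hw, by simp [toggle, hw]⟩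
  have hvD : v ∈ D := by simpa [toggle] using hv
  exact ⟨h.subset hvD, by simp [h.left_eq_some v hvD]⟩

end SwapsOn

end Toggle

section Filter

variable {V L : Type*} [Fintype V] [DecidableEq V] {R D : Finset V} {σ τ : V → Option L}
  {X Y : V → L}

namespace SwapsOn

lemma prod_erase_eq (h : SwapsOn R D σ τ X Y) {g : (V → L) → ℝ} (hg : DependsOn g R) :
    ∏ c ∈ (univ.filter (IsChoice σ R)).erase (toggle D ⊥), g (potential σ X c) =
      ∏ c ∈ (univ.filter (IsChoice τ R)).erase (toggle D ⊥), g (potential τ Y c) := by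
  refine prod_nbij' (toggle D) (toggle D) ?_ ?_ (fun c _ => toggle_toggle D c)
    (fun c _ => toggle_toggle D c) (fun c _ => hg (h.potential_toggle c))
  all_goals
    simp only [mem_erase, mem_filter, mem_univ, true_and]
    rintro c ⟨hne, hc⟩
    refine ⟨fun heq => (isChoice_iff.mp hc).2 ?_, ?_⟩
  · simpa using congrArg (toggle D) heq
  · exact h.isChoice_toggle hc hne
  · simpa using congrArg (toggle D) heq
  · exact h.symm.isChoice_toggle hc hne

end SwapsOn

variable [Fintype L] [Nonempty L] {C : Finset V → (V → L) → ℝ}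

lemma q_congr (hC : DependsOn (C R) R) (hX : ∀ v ∈ R, X v = Y v) (hσ : ∀ v ∈ R, σ v = τ v) :
    q C σ X R = q C τ Y R := by
  have h : SwapsOn R ∅ σ τ X Y :=
    ⟨empty_subset R, fun v hv _ => hX v hv, fun v hv _ => hσ v hv, by simp, by simp⟩
  have hbot : ∀ ρ : V → Option L, toggle ∅ ⊥ ∉ univ.filter (IsChoice ρ R) := fun ρ => by
    simp [isChoice_iff]
  simpa only [q, erase_eq_of_notMem (hbot _)] using
    h.prod_erase_eq (hC.div_const (Cstar C R))

lemma SwapsOn.q_mul_eq (hC : DependsOn (C R) R) (h : SwapsOn R D σ τ X Y) (hD : D.Nonempty) :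
    q C σ X R * C R X = q C τ Y R * C R Y := by
  unfold q
  rw [← mul_prod_erase _ _ ((mem_filter_univ _).mpr (h.isChoice_toggle_bot hD)),
    ← mul_prod_erase _ _ ((mem_filter_univ _).mpr (h.symm.isChoice_toggle_bot hD)),
    h.prod_erase_eq (hC.div_const (Cstar C R)),
    hC h.potential_toggle_bot, hC h.symm.potential_toggle_bot]
  ring

end Filter

section Move

variable {V L : Type*} {𝒮 : Finset (Finset V)} {σ : V → Option L} {I : {R // R ∈ 𝒮} → Bool}
  {X Y : V → L}

namespace MoveMapsTo

lemma eq_of_restricted (h : MoveMapsTo 𝒮 σ I X Y) {v : V} (hv : Restricted 𝒮 I v) :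
    X v = Y v := by
  simp [h v, hv]

lemma eq_some_of_ne_s3 (h : MoveMapsTo 𝒮 σ I X Y) {v : V} (hv : X v ≠ Y v) :
    σ v = some (Y v) := by
  have hr : ¬ Restricted 𝒮 I v := fun hr => hv (h.eq_of_restricted hr)
  cases hσ : σ v with
  | none => simp [h v, hr, hσ] at hv
  | some l => simp [h v, hr, hσ]

lemma swapsOn [DecidableEq L] (h : MoveMapsTo 𝒮 σ I X Y) (R : Finset V) :
    SwapsOn R (R.filter fun v => X v ≠ Y v) σ (sigma' X Y σ) X Y where
  subset := filter_subset _ R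
  label_eq v hv hD := by simpa [hv] using hD
  proposal_eq v hv hD := by simp_all [sigma']
  left_eq_some v hD := h.eq_some_of_ne_s3 (mem_filter.mp hD).2
  right_eq_some v hD := by simp_all [sigma']

end MoveMapsTo

end Move

end DistSampling

namespace DistSampling

variable {V L : Type*} [Fintype V] [Fintype L] [DecidableEq V] [DecidableEq L]
  [Nonempty V] [Nonempty L]

theorem filter_ratio_general
(𝒮 : Finset (Finset V)) (C : Finset V → (V → L) → ℝ)
    (hCloc : ∀ R ∈ 𝒮, ∀ X Y : V → L, (∀ v ∈ R, X v = Y v) → C R X = C R Y)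
    (X Y : V → L)
    (σ : V → Option L) (I : {R // R ∈ 𝒮} → Bool) (hmap : MoveMapsTo 𝒮 σ I X Y)
    (R : Finset V) (hR : R ∈ 𝒮) :
    (I ⟨R, hR⟩ = true →
      q C σ X R * C R X = q C (sigma' X Y σ) Y R * C R Y) ∧
    (I ⟨R, hR⟩ = false →
      (1 - q C σ X R) * C R X = (1 - q C (sigma' X Y σ) Y R) * C R Y) := by
  have hC : DependsOn (C R) R := fun Z W h => hCloc R hR Z W h
  have of_agree (h : ∀ v ∈ R, X v = Y v) :
      q C σ X R = q C (sigma' X Y σ) Y R ∧ C R X = C R Y :=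
    ⟨q_congr hC h fun v hv => by simp [sigma', h v hv], hC h⟩
  refine ⟨fun _ => ?_, fun hI => ?_⟩
  · by_cases hD : (R.filter fun v => X v ≠ Y v).Nonempty
    · exact (hmap.swapsOn R).q_mul_eq hC hD
    · obtain ⟨hq, hCXY⟩ := of_agree (by simpa [filter_nonempty_iff] using hD)
      rw [hq, hCXY]
  · obtain ⟨hq, hCXY⟩ := of_agree fun v hv => hmap.eq_of_restricted ⟨⟨R, hR⟩, hv, hI⟩
    rw [hq, hCXY]

/-- for each constraint set R ∈ 𝒮, the local filter probabilities
satisfy q_R(σ,X)·C_R(X↾R) = q_R(σ',Y)·C_R(Y↾R) when I_R = 1, and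
(1−q_R(σ,X))·C_R(X↾R) = (1−q_R(σ',Y))·C_R(Y↾R) when I_R = 0. -/
theorem filter_ratio
(b : V → L → ℝ) (p : ℝ) (𝒮 : Finset (Finset V)) (C : Finset V → (V → L) → ℝ)
    (hb : ∀ v l, 0 ≤ b v l) (hS : ∀ v, 0 < Sw b v)
    (hcard : ∀ R ∈ 𝒮, 2 ≤ R.card)
    (hC0 : ∀ R ∈ 𝒮, ∀ X : V → L, 0 ≤ C R X)
    (hCloc : ∀ R ∈ 𝒮, ∀ X Y : V → L, (∀ v ∈ R, X v = Y v) → C R X = C R Y)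
    (hCstar : ∀ R ∈ 𝒮, 0 < Cstar C R)
    (hp : 0 < p) (hp1 : p < 1)
    (hvalid : ∃ Z : V → L, 0 < weight b 𝒮 C Z)
    (X Y : V → L) (hX : 0 < weight b 𝒮 C X) (hY : 0 < weight b 𝒮 C Y) (hXY : X ≠ Y)
    (σ : V → Option L) (I : {R // R ∈ 𝒮} → Bool) (hmap : MoveMapsTo 𝒮 σ I X Y)
    (R : Finset V) (hR : R ∈ 𝒮) :
    (I ⟨R, hR⟩ = true →
      q C σ X R * C R X = q C (sigma' X Y σ) Y R * C R Y) ∧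
    (I ⟨R, hR⟩ = false →
      (1 - q C σ X R) * C R X = (1 - q C (sigma' X Y σ) Y R) * C R Y) :=
  filter_ratio_general 𝒮 C hCloc X Y σ I hmap R hR

end DistSampling
end
end

section
/- Suppose X and Y are valid labelings connected by a sequence of valid labelings X = Z_1, Z_2, …, Z_m = Y in which consecutive labelings differ at exactly one vertex. Then the distributed Metropolis chain can move from X to Y: there exists t ≥ 1 such that M^t[X,Y] > 0, where M^t denotes the t-th matrix power of the transition matrix M indexed by labelings. -/
open scoped Classical
open Finset

noncomputable section

namespace DistSampling

variable {V L : Type*} [Fintype V] [Fintype L] [DecidableEq V] [DecidableEq L]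
  [Nonempty V] [Nonempty L]

/-!
Every entry of `M` is a sum of nonnegative move probabilities, so it suffices to exhibit one
move of positive probability for each step. From `X`, let only the vertex `v` where `X` and `Y`
differ be active, proposing `Y v`, and let every filter pass. Each potential labeling of every
constraint set is then `Y` itself, so each filter passes with positive probability because `Y` is
valid. Taking `Y = X` gives a positive diagonal, which pads the chain to a power `t ≥ 1`.
-/

section NonnegMatrix

variable {n α : Type*} [Fintype n] [Semiring α] [PartialOrder α] [IsStrictOrderedRing α]

theorem _root_.Matrix.mul_apply_pos {A B : Matrix n n α} (hA : ∀ i j, 0 ≤ A i j)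
    (hB : ∀ i j, 0 ≤ B i j) {i j k : n} (hij : 0 < A i j) (hjk : 0 < B j k) : 0 < (A * B) i k := by
  rw [Matrix.mul_apply]
  exact (Finset.sum_pos_iff_of_nonneg fun l _ => mul_nonneg (hA i l) (hB l k)).2
    ⟨j, mem_univ j, mul_pos hij hjk⟩

theorem _root_.Matrix.pow_apply_pos_of_chain [DecidableEq n] {A : Matrix n n α}
    (hA : ∀ i j, 0 ≤ A i j) {m : ℕ} (Z : Fin m → n)
    (hZ : ∀ i : Fin m, ∀ h : (i : ℕ) + 1 < m, 0 < A (Z i) (Z ⟨i + 1, h⟩)) :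
    ∀ k (hk : k < m), 0 < (A ^ k) (Z ⟨0, by omega⟩) (Z ⟨k, hk⟩) := by
  intro k
  induction k with
  | zero => intro hk; simp
  | succ k ih =>
    intro hk
    rw [pow_succ]
    exact Matrix.mul_apply_pos (Matrix.pow_apply_nonneg hA k) hA (ih (by omega))
      (hZ ⟨k, by omega⟩ hk)

end NonnegMatrix

section MetropolisChain

omit [DecidableEq L] [Nonempty V]

variable {b : V → L → ℝ} {p : ℝ} {𝒮 : Finset (Finset V)} {C : Finset V → (V → L) → ℝ}

omit [DecidableEq V] [Nonempty L] in
theorem Pprop_nonneg (hb : ∀ v l, 0 ≤ b v l) (hS : ∀ v, 0 < Sw b v) (hp : 0 ≤ p) (hp1 : p ≤ 1)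
    (σ : V → Option L) : 0 ≤ Pprop b p σ :=
  prod_nonneg fun v _ => by
    cases σ v with
    | none => exact sub_nonneg.2 hp1
    | some l => exact div_nonneg (mul_nonneg hp (hb v l)) (hS v).le

section FilterBounds

variable (hC0 : ∀ R ∈ 𝒮, ∀ X : V → L, 0 ≤ C R X) (hCstar : ∀ R ∈ 𝒮, 0 < Cstar C R)
include hC0 hCstar

theorem q_mem_Icc (σ : V → Option L) (X : V → L) {R : Finset V} (hR : R ∈ 𝒮) :
    q C σ X R ∈ Set.Icc 0 1 :=
  ⟨prod_nonneg fun _ _ => div_nonneg (hC0 R hR _) (hCstar R hR).le,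
    prod_le_one (fun _ _ => div_nonneg (hC0 R hR _) (hCstar R hR).le)
      fun _ _ => (div_le_one (hCstar R hR)).2 (le_sup' _ (mem_univ _))⟩

theorem Pfilter_nonneg (σ : V → Option L) (X : V → L) (I : {R // R ∈ 𝒮} → Bool) :
    0 ≤ Pfilter C 𝒮 σ X I :=
  prod_nonneg fun R _ => by
    obtain ⟨h0, h1⟩ := q_mem_Icc hC0 hCstar σ X R.2
    split <;> linarith

variable (hb : ∀ v l, 0 ≤ b v l) (hS : ∀ v, 0 < Sw b v) (hp : 0 ≤ p) (hp1 : p ≤ 1)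
include hb hS hp hp1

theorem moveTerm_nonneg (σ : V → Option L) (I : {R // R ∈ 𝒮} → Bool) (X Y : V → L) :
    0 ≤ if MoveMapsTo 𝒮 σ I X Y then Pprop b p σ * Pfilter C 𝒮 σ X I else 0 := by
  split
  · exact mul_nonneg (Pprop_nonneg hb hS hp hp1 σ) (Pfilter_nonneg hC0 hCstar σ X I)
  · exact le_rfl

theorem M_nonneg (X Y : V → L) : 0 ≤ M b p 𝒮 C X Y :=
  sum_nonneg fun σ _ => sum_nonneg fun I _ =>
    moveTerm_nonneg hC0 hCstar hb hS hp hp1 σ I X Y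

theorem M_apply_pos_of_moveMapsTo {σ : V → Option L} {I : {R // R ∈ 𝒮} → Bool} {X Y : V → L}
    (hmove : MoveMapsTo 𝒮 σ I X Y) (hσ : 0 < Pprop b p σ) (hI : 0 < Pfilter C 𝒮 σ X I) :
    0 < M b p 𝒮 C X Y := by
  have hterm := moveTerm_nonneg hC0 hCstar hb hS hp hp1 (X := X) (Y := Y)
  refine sum_pos' (fun σ _ => sum_nonneg fun I _ => hterm σ I) ⟨σ, mem_univ _, ?_⟩
  refine sum_pos' (fun I _ => hterm σ I) ⟨I, mem_univ _, ?_⟩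
  rw [if_pos hmove]
  exact mul_pos hσ hI

end FilterBounds

omit [Fintype L] [DecidableEq V] [Nonempty L] in
theorem b_pos_of_weight_pos (hb : ∀ v l, 0 ≤ b v l) {X : V → L} (hX : 0 < weight b 𝒮 C X)
    (v : V) : 0 < b v (X v) := by
  refine (hb v (X v)).lt_of_ne fun h => hX.ne' ?_
  rw [weight, prod_eq_zero (mem_univ v) h.symm, zero_mul]

omit [Fintype L] [DecidableEq V] [Nonempty L] in
theorem C_pos_of_weight_pos (hC0 : ∀ R ∈ 𝒮, ∀ X : V → L, 0 ≤ C R X) {X : V → L}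
    (hX : 0 < weight b 𝒮 C X) {R : Finset V} (hR : R ∈ 𝒮) : 0 < C R X := by
  refine (hC0 R hR X).lt_of_ne fun h => hX.ne' ?_
  rw [weight, prod_eq_zero hR h.symm, mul_zero]

def singleProposal (v : V) (l : L) : V → Option L :=
  Function.update (fun _ => none) v (some l)

omit [Fintype V] [Fintype L] [Nonempty L] in
theorem potential_singleProposal {X Y : V → L} {v : V} (hXY : ∀ u, u ≠ v → X u = Y u)
    {R : Finset V} {c : V → Bool} (hc : IsChoice (singleProposal v (Y v)) R c) :
    potential (singleProposal v (Y v)) X c = Y := by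
  obtain ⟨hactive, w, -, hcw⟩ := hc
  have hc_only : ∀ u, c u = true → u = v := fun u hu => by
    by_contra hne
    simpa [singleProposal, hne] using (hactive u hu).2
  have hcv : c v = true := hc_only w hcw ▸ hcw
  funext u
  by_cases hu : u = v
  · subst hu; simp [potential, singleProposal, hcv]
  · have hcu : c u = false := by simpa using mt (hc_only u) hu
    simp [potential, hcu, hXY u hu]

theorem M_apply_pos_of_forall_ne_eq (hb : ∀ v l, 0 ≤ b v l) (hS : ∀ v, 0 < Sw b v)
    (hC0 : ∀ R ∈ 𝒮, ∀ X : V → L, 0 ≤ C R X) (hCstar : ∀ R ∈ 𝒮, 0 < Cstar C R)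
    (hp : 0 < p) (hp1 : p < 1) {X Y : V → L} (hY : 0 < weight b 𝒮 C Y) (v : V)
    (hXY : ∀ u, u ≠ v → X u = Y u) : 0 < M b p 𝒮 C X Y := by
  have hmove : MoveMapsTo 𝒮 (singleProposal v (Y v)) (fun _ => true) X Y := by
    intro u
    rw [if_neg (by simp [Restricted])]
    by_cases hu : u = v
    · subst hu; simp [singleProposal]
    · simp [singleProposal, hu, hXY u hu]
  have hσ : 0 < Pprop b p (singleProposal v (Y v)) := prod_pos fun u _ => by
    by_cases hu : u = v
    · subst hu
      simpa [singleProposal] using div_pos (mul_pos hp (b_pos_of_weight_pos hb hY u)) (hS u)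
    · simpa [singleProposal, hu] using hp1
  have hI : 0 < Pfilter C 𝒮 (singleProposal v (Y v)) X fun _ => true := prod_pos fun R _ => by
    simp only [if_true]
    refine prod_pos fun c hc => ?_
    rw [potential_singleProposal hXY (mem_filter.1 hc).2]
    exact div_pos (C_pos_of_weight_pos hC0 hY R.2) (hCstar R R.2)
  exact M_apply_pos_of_moveMapsTo hC0 hCstar hb hS hp.le hp1.le hmove hσ hI

end MetropolisChain

/-- if valid labelings X and Y are connected by a sequence of valid
labelings in which consecutive labelings differ at exactly one vertex, then
M^t[X,Y] > 0 for some t ≥ 1. -/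
theorem irreducible_on_connected
(b : V → L → ℝ) (p : ℝ) (𝒮 : Finset (Finset V)) (C : Finset V → (V → L) → ℝ)
    (hb : ∀ v l, 0 ≤ b v l) (hS : ∀ v, 0 < Sw b v)
    (hC0 : ∀ R ∈ 𝒮, ∀ X : V → L, 0 ≤ C R X)
    (hCstar : ∀ R ∈ 𝒮, 0 < Cstar C R)
    (hp : 0 < p) (hp1 : p < 1)
    (X Y : V → L) (hX : 0 < weight b 𝒮 C X)
    (m : ℕ) (hm : 1 ≤ m) (Z : Fin m → (V → L))
    (hZX : Z ⟨0, by omega⟩ = X) (hZY : Z ⟨m - 1, by omega⟩ = Y)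
    (hZvalid : ∀ i, 0 < weight b 𝒮 C (Z i))
    (hstep : ∀ i : Fin m, ∀ h : (i : ℕ) + 1 < m,
      ∃ v, Z i v ≠ Z ⟨(i : ℕ) + 1, h⟩ v ∧
        ∀ u, u ≠ v → Z i u = Z ⟨(i : ℕ) + 1, h⟩ u) :
    ∃ t : ℕ, 1 ≤ t ∧ 0 < (M b p 𝒮 C ^ t) X Y := by
  have hM := M_nonneg hC0 hCstar hb hS hp.le hp1.le
  have hloop : 0 < M b p 𝒮 C X X :=
    M_apply_pos_of_forall_ne_eq hb hS hC0 hCstar hp hp1 hX (Classical.arbitrary V) fun _ _ => rfl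
  have hchain : 0 < (M b p 𝒮 C ^ (m - 1)) X Y := by
    have := Matrix.pow_apply_pos_of_chain hM Z (fun i h => by
      obtain ⟨v, -, hv⟩ := hstep i h
      exact M_apply_pos_of_forall_ne_eq hb hS hC0 hCstar hp hp1 (hZvalid _) v hv) (m - 1) (by omega)
    rwa [hZX, hZY] at this
  refine ⟨m - 1 + 1, by omega, ?_⟩
  rw [pow_succ']
  exact Matrix.mul_apply_pos hM (Matrix.pow_apply_nonneg hM _) hloop hchain

end DistSampling
end
end
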